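/- With the setup of the NP-hardness reduction (m divisible by 4, c_j = 1 iff j ≤ m/4, weights w_i = c_i − ∑_{j=1}^i c_j/(m−j+1)), for all 1 ≤ j ≤ m/4 − 1: (∑_{i=1}^{j} w_i)/√(j(m−j)) ≤ (∑_{i=1}^{j+1} w_i)/√((j+1)(m−(j+1))). That is, the normalized prefix score is nondecreasing in the prefix length up to m/4. -/

import Mathlib

/-!
Since `c ≤ 1`, every weight is at most `1`, so the prefix sum `S` up to `j` is at most `j`; and for
`j + 1 ≤ m/4` every term of the sum defining `w (j+1)` is at most `1/(m-j)`, so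
`w (j+1) (m - j) ≥ m - 2j - 1`. With `a = √(j(m-j))` and `b = √((j+1)(m-j-1))` one has
`b² - a² = m - 2j - 1`, hence `S (b - a)(a + b) ≤ j (m - 2j - 1) ≤ w (j+1) a² ≤ w (j+1) a (a + b)`,
which is the cross-multiplied inequality `S b ≤ (S + w (j+1)) a`.
-/

open Finset

noncomputable def logRankWeight (m : ℕ) (c : ℕ → ℝ) (i : ℕ) : ℝ :=
  c i - ∑ k ∈ Icc 1 i, c k / ((m : ℝ) - k + 1)

section logRankWeight

variable {m i : ℕ} {c : ℕ → ℝ}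

lemma sub_add_one_pos_of_le {k : ℕ} (hk : k ≤ m) : 0 < (m : ℝ) - k + 1 := by
  have : (k : ℝ) ≤ m := by exact_mod_cast hk
  linarith

lemma logRankWeight_le (hc : ∀ k, 0 ≤ c k) (hi : i ≤ m) : logRankWeight m c i ≤ c i := by
  have hsum : 0 ≤ ∑ k ∈ Icc 1 i, c k / ((m : ℝ) - k + 1) :=
    sum_nonneg fun k hk ↦
      div_nonneg (hc k) (sub_add_one_pos_of_le ((mem_Icc.1 hk).2.trans hi)).le
  unfold logRankWeight
  linarith

lemma sub_div_le_logRankWeight (hc : ∀ k, c k ≤ 1) (hi : i ≤ m) :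
    c i - i / ((m : ℝ) - i + 1) ≤ logRankWeight m c i := by
  have hterm : ∀ k ∈ Icc 1 i, c k / ((m : ℝ) - k + 1) ≤ 1 / ((m : ℝ) - i + 1) := by
    intro k hk
    have hki : (k : ℝ) ≤ i := by exact_mod_cast (mem_Icc.1 hk).2
    have hpos := sub_add_one_pos_of_le ((mem_Icc.1 hk).2.trans hi)
    calc c k / ((m : ℝ) - k + 1) ≤ 1 / ((m : ℝ) - k + 1) := by gcongr; exact hc k
      _ ≤ 1 / ((m : ℝ) - i + 1) := by
        gcongr
        exact sub_add_one_pos_of_le hi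
  have hsum := sum_le_sum hterm
  rw [sum_const, Nat.card_Icc, Nat.add_sub_cancel, nsmul_eq_mul, mul_one_div] at hsum
  unfold logRankWeight
  linarith

end logRankWeight

lemma div_sqrt_le_add_div_sqrt {m x S W : ℝ} (hx : 0 < x) (hxm : 2 * x + 1 ≤ m) (hS : S ≤ x)
    (hW : 1 - (x + 1) / (m - x) ≤ W) :
    S / √(x * (m - x)) ≤ (S + W) / √((x + 1) * (m - (x + 1))) := by
  have hmx : 0 < m - x := by linarith
  have hprod_a : 0 < x * (m - x) := mul_pos hx hmx
  have hprod_b : 0 < (x + 1) * (m - (x + 1)) := mul_pos (by linarith) (by linarith)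
  set a := √(x * (m - x))
  set b := √((x + 1) * (m - (x + 1)))
  have ha : 0 < a := Real.sqrt_pos.2 hprod_a
  have hb : 0 < b := Real.sqrt_pos.2 hprod_b
  have ha2 : a ^ 2 = x * (m - x) := Real.sq_sqrt hprod_a.le
  have hb2 : b ^ 2 = (x + 1) * (m - (x + 1)) := Real.sq_sqrt hprod_b.le
  have hab : a ≤ b := Real.sqrt_le_sqrt (by nlinarith)
  have hWm : m - 2 * x - 1 ≤ W * (m - x) := by
    have := mul_le_mul_of_nonneg_right hW hmx.le
    rw [sub_mul, div_mul_cancel₀ _ hmx.ne', one_mul] at this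
    linarith
  have hW0 : 0 ≤ W := nonneg_of_mul_nonneg_left (by linarith) hmx
  have key : x * (b - a) ≤ W * a := by
    refine le_of_mul_le_mul_right ?_ (add_pos ha hb)
    calc x * (b - a) * (a + b) = x * (b ^ 2 - a ^ 2) := by ring
      _ = x * (m - 2 * x - 1) := by rw [hb2, ha2]; ring
      _ ≤ x * (W * (m - x)) := by gcongr
      _ = W * a * a := by rw [mul_assoc W, ← sq, ha2]; ring
      _ ≤ W * a * (a + b) := by gcongr; linarith
  rw [div_le_div_iff₀ ha hb]
  nlinarith [mul_le_mul_of_nonneg_right hS (sub_nonneg.2 hab)]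

theorem normalized_prefix_score_monotone_general (m : ℕ)
    (c w : ℕ → ℝ)
    (hc : ∀ j, c j = if j ≤ m / 4 then 1 else 0)
    (hw : ∀ i, w i = c i - ∑ j ∈ Finset.Icc 1 i, c j / ((m : ℝ) - j + 1)) :
    ∀ j, 1 ≤ j → j ≤ m / 4 - 1 →
      (∑ i ∈ Finset.Icc 1 j, w i) / Real.sqrt ((j : ℝ) * ((m : ℝ) - j)) ≤
      (∑ i ∈ Finset.Icc 1 (j + 1), w i) /
        Real.sqrt (((j : ℝ) + 1) * ((m : ℝ) - ((j : ℝ) + 1))) := by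
  intro j hj1 hj2
  obtain rfl : w = logRankWeight m c := funext hw
  have hc0 : ∀ k, 0 ≤ c k := fun k ↦ by rw [hc]; split_ifs <;> norm_num
  have hc1 : ∀ k, c k ≤ 1 := fun k ↦ by rw [hc]; split_ifs <;> norm_num
  have hprefix : ∑ i ∈ Icc 1 j, logRankWeight m c i ≤ j := by
    calc ∑ i ∈ Icc 1 j, logRankWeight m c i ≤ ∑ _i ∈ Icc 1 j, (1 : ℝ) :=
          sum_le_sum fun i hi ↦ (logRankWeight_le hc0 (by grind)).trans (hc1 i)
      _ = j := by simp
  have hnext := sub_div_le_logRankWeight hc1 (show j + 1 ≤ m by omega)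
  rw [hc, if_pos (by omega)] at hnext
  rw [sum_Icc_succ_top (by omega)]
  refine div_sqrt_le_add_div_sqrt (by positivity) (by exact_mod_cast (by omega : 2 * j + 1 ≤ m))
    hprefix ?_
  push_cast at hnext
  convert hnext using 4
  ring

/-- In the NP-hardness reduction setup, the normalized prefix score
`(∑_{i=1}^{j} w i)/√(j(m-j))` is nondecreasing in `j` for `1 ≤ j ≤ m/4 - 1`. -/
theorem normalized_prefix_score_monotone (m : ℕ) (hm : 0 < m) (h4 : 4 ∣ m)
    (c w : ℕ → ℝ)
    (hc : ∀ j, c j = if j ≤ m / 4 then 1 else 0)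
    (hw : ∀ i, w i = c i - ∑ j ∈ Finset.Icc 1 i, c j / ((m : ℝ) - j + 1))
    (hpos : ∀ i, 1 ≤ i → i ≤ m / 4 → 0 < w i)
    (hdec : ∀ i j, 1 ≤ i → i < j → j ≤ m / 4 → w j < w i) :
    ∀ j, 1 ≤ j → j ≤ m / 4 - 1 →
      (∑ i ∈ Finset.Icc 1 j, w i) / Real.sqrt ((j : ℝ) * ((m : ℝ) - j)) ≤
      (∑ i ∈ Finset.Icc 1 (j + 1), w i) /
        Real.sqrt (((j : ℝ) + 1) * ((m : ℝ) - ((j : ℝ) + 1))) :=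
  normalized_prefix_score_monotone_general m c w hc hw
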